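/- Let K = k((t)) with ring of integers O_K = k[[t]], L/K a cyclic Galois extension of degree r with Φ generating Gal(L/K), and let Λ_{L,1} ⊂ D_{L,1} consist of Ore polynomials with all coefficients of nonnegative valuation. Let ε̄ : Λ_{L,1} → End_k(O_L/tO_L) be the reduction mod t of the evaluation map T ↦ Φ. Then for all f ∈ Λ_{L,1}, v_t(Nrd(f)) ≥ dim_k ker ε̄(f). -/

import Mathlib

/-!
Among the `K`-bases `g` of `L` made of integral elements and extending `y`, pick one for which
`v (det (Φ^i (g j)))` is minimal up to `1` (these valuations are nonnegative but need not be
integers). Such a basis spans `O_L` over `O_K`: otherwise an exchange of one basis vector outside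
`y` would lower that valuation by at least `1`, or the residual independence of `y` would fail
(Nakayama). In this basis the matrix of `ε(f)` has integral entries, and its columns at the `y i`
are divisible by `t`, so its determinant has valuation at least `n`. Finally `Nrd(f) = det ε(f)`,
because the Galois matrix `(Φ^i (g j))`, invertible by Dedekind's independence of characters,
conjugates `M_fᵀ` into the matrix of `ε(f)`.
-/

/-- The matrix `M_f` of right multiplication by `f = a₀ + a₁T + ⋯ + a_{r−1}T^{r−1}`
on `D_{L,x} = L[T;Φ]/(T^r − x)` in the `L`-basis `(1, T, …, T^{r-1})`; its
determinant is the reduced norm `Nrd(f)`. -/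
noncomputable def oreMatrix {L : Type*} [CommRing L] (r : ℕ) (Φ : L → L) (x : L)
    (a : Fin r → L) : Matrix (Fin r) (Fin r) L :=
  Matrix.of fun u v =>
    if h : v.val ≤ u.val then
      Φ^[v.val] (a ⟨u.val - v.val, by have := u.isLt; omega⟩)
    else
      x * Φ^[v.val] (a ⟨u.val + r - v.val, by have := u.isLt; have := v.isLt; omega⟩)

open Module

namespace AddValuation

variable {R Γ : Type*} [LinearOrderedAddCommMonoidWithTop Γ]

theorem map_prod [CommRing R] {ι : Type*} (v : AddValuation R Γ) (s : Finset ι) (f : ι → R) :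
    v (∏ i ∈ s, f i) = ∑ i ∈ s, v (f i) := by
  classical
  induction s using Finset.induction_on with
  | empty => simp
  | insert a s ha ih => rw [Finset.prod_insert ha, Finset.sum_insert ha, v.map_mul, ih]

theorem le_map_det [CommRing R] {n : Type*} [Fintype n] [DecidableEq n] (v : AddValuation R Γ)
    (M : Matrix n n R) (c : n → Γ) (hc : ∀ i j, c j ≤ v (M i j)) : ∑ j, c j ≤ v M.det := by
  rw [Matrix.det_apply]
  refine v.map_le_sum fun σ _ => ?_
  have hprod : ∑ j, c j ≤ v (∏ i, M (σ i) i) := by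
    rw [v.map_prod]
    exact Finset.sum_le_sum fun i _ => hc (σ i) i
  rcases Int.units_eq_one_or (Equiv.Perm.sign σ) with h | h
  · rwa [h, one_smul]
  · rwa [h, Units.neg_smul, one_smul, v.map_neg]

theorem nonneg_inv_mul [Field R] (v : AddValuation R Γ) {a b : R} (ha : a ≠ 0) (hab : v a ≤ v b) :
    0 ≤ v (a⁻¹ * b) :=
  calc (0 : Γ) = v (a⁻¹ * a) := by rw [inv_mul_cancel₀ ha, v.map_one]
    _ = v a⁻¹ + v a := v.map_mul _ _
    _ ≤ v a⁻¹ + v b := add_le_add le_rfl hab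
    _ = v (a⁻¹ * b) := (v.map_mul _ _).symm

end AddValuation

theorem map_one_eq_zero_of_map_mul {M : Type*} [MulOneClass M] {v : M → WithTop ℚ}
    (h1 : v 1 ≠ ⊤) (hmul : ∀ a b, v (a * b) = v a + v b) : v 1 = 0 := by
  obtain ⟨q, hq⟩ := WithTop.ne_top_iff_exists.mp h1
  have h := hmul 1 1
  rw [mul_one, ← hq, ← WithTop.coe_add, WithTop.coe_inj] at h
  rw [← hq, WithTop.coe_eq_zero]
  linarith

theorem one_le_of_pos_of_forall_eq_intCast {α : Type*} [Zero α] {v : α → WithTop ℚ} (h0 : v 0 = ⊤)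
    (hint : ∀ a, a ≠ 0 → ∃ z : ℤ, v a = (z : ℚ)) {a : α} (ha : 0 < v a) : 1 ≤ v a := by
  rcases eq_or_ne a 0 with rfl | ha0
  · simp [h0]
  obtain ⟨z, hz⟩ := hint a ha0
  rw [hz] at ha ⊢
  exact_mod_cast (by exact_mod_cast ha : (0 : ℤ) < z)

theorem exists_forall_lt_add_one {α : Type*} {s : Set α} (hs : s.Nonempty) (φ : α → WithTop ℚ)
    (h0 : ∀ a ∈ s, 0 ≤ φ a) (htop : ∀ a ∈ s, φ a ≠ ⊤) : ∃ a ∈ s, ∀ b ∈ s, φ a < φ b + 1 := by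
  let m : α → ℕ := fun a => ⌊(φ a).untopD 0⌋₊
  refine ⟨Function.argminOn m s hs, Function.argminOn_mem m s hs, fun b hb => ?_⟩
  by_contra! hle
  apply Function.not_lt_argminOn m s hb
  obtain ⟨p, hp⟩ := WithTop.ne_top_iff_exists.mp (htop b hb)
  obtain ⟨q, hq⟩ := WithTop.ne_top_iff_exists.mp (htop _ (Function.argminOn_mem m s hs))
  have hp0 : 0 ≤ p := by exact_mod_cast hp ▸ h0 b hb
  rw [← hp, ← hq] at hle
  have hpq : p + 1 ≤ q := by exact_mod_cast hle
  simp only [m, ← hp, ← hq, WithTop.untopD_coe]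
  calc ⌊p⌋₊ < ⌊p⌋₊ + 1 := Nat.lt_succ_self _
    _ = ⌊p + 1⌋₊ := (Nat.floor_add_one hp0).symm
    _ ≤ ⌊q⌋₊ := Nat.floor_le_floor hpq

theorem Module.Basis.exists_embedding_apply_eq {K V : Type*} [Field K] [AddCommGroup V]
    [Module K V] [FiniteDimensional K V] {n r : ℕ} (hr : finrank K V = r) {y : Fin n → V}
    (hy : LinearIndependent K y) :
    ∃ (b : Basis (Fin r) K V) (e : Fin n ↪ Fin r), ∀ i, b (e i) = y i := by
  classical
  let b := Basis.sumExtend hy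
  have : Finite (Fin n ⊕ sumExtendIndex hy) := Module.Finite.finite_basis b
  have := Fintype.ofFinite (Fin n ⊕ sumExtendIndex hy)
  let eqv := Fintype.equivFinOfCardEq ((finrank_eq_card_basis b).symm.trans hr)
  refine ⟨b.reindex eqv, ⟨eqv ∘ Sum.inl, eqv.injective.comp Sum.inl_injective⟩, fun i => ?_⟩
  simp only [b, Basis.reindex_apply, Equiv.symm_apply_apply, Function.comp_apply,
    Function.Embedding.coeFn_mk, Basis.sumExtend, Basis.coe_extend]
  erw [Equiv.Set.sumDiffSubset_apply_inl]
  · rfl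
  · exact hy.linearIndepOn_id.subset_extend _

section Galois

variable {K L : Type*} [Field K] [Field L] [Algebra K L] {r : ℕ}

def galoisMatrix (Φ : L ≃ₐ[K] L) (g : Fin r → L) : Matrix (Fin r) (Fin r) L :=
  Matrix.of fun i j => (Φ ^ (i : ℕ)) (g j)

-- `ε(f)`: the element `∑ fᵢ Tⁱ` of `L[T;Φ]` acting on `L`, with `T` acting as `Φ`.
def oreEval (Φ : L ≃ₐ[K] L) (f : Fin r → L) : L →ₗ[K] L :=
  ∑ i, f i • ((Φ ^ (i : ℕ) : L ≃ₐ[K] L) : L →ₐ[K] L).toLinearMap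

@[simp]
theorem oreEval_apply (Φ : L ≃ₐ[K] L) (f : Fin r → L) (x : L) :
    oreEval Φ f x = ∑ i, f i * (Φ ^ (i : ℕ)) x := by
  simp [oreEval]

theorem oreEval_eq_zero_iff {Φ : L ≃ₐ[K] L} (hΦ : r ≤ orderOf Φ) {f : Fin r → L} :
    oreEval Φ f = 0 ↔ f = 0 := by
  refine ⟨fun h => ?_, fun h => by simp [oreEval, h]⟩
  have hinj : Function.Injective fun i : Fin r => ((Φ ^ (i : ℕ) : L ≃ₐ[K] L) : L →ₐ[K] L) :=
    fun i j hij => Fin.ext <| pow_injOn_Iio_orderOf (x := Φ) (lt_of_lt_of_le i.isLt hΦ)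
      (lt_of_lt_of_le j.isLt hΦ) (AlgEquiv.coe_toAlgHom_injective hij)
  exact funext <| Fintype.linearIndependent_iff.mp
    ((linearIndependent_algHom_toLinearMap K L L).comp _ hinj) f h

theorem det_galoisMatrix_ne_zero {Φ : L ≃ₐ[K] L} (hΦ : r ≤ orderOf Φ) (b : Basis (Fin r) K L) :
    (galoisMatrix Φ b).det ≠ 0 := by
  classical
  intro h
  obtain ⟨d, hd0, hd⟩ := Matrix.exists_vecMul_eq_zero_iff.mpr h
  refine hd0 ((oreEval_eq_zero_iff hΦ).mp (b.ext fun j => ?_))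
  simpa [Matrix.vecMul, dotProduct, galoisMatrix] using congrFun hd j

theorem linearIndependent_of_det_galoisMatrix_ne_zero {Φ : L ≃ₐ[K] L} {g : Fin r → L}
    (h : (galoisMatrix Φ g).det ≠ 0) : LinearIndependent K g := by
  classical
  rw [Fintype.linearIndependent_iff]
  intro a ha i
  have hv : (galoisMatrix Φ g).mulVec (fun j => algebraMap K L (a j)) = 0 := by
    funext m
    simpa [Matrix.mulVec, dotProduct, galoisMatrix, Algebra.smul_def, map_sum, -AlgEquiv.coe_pow,
      mul_comm] using
      congrArg (Φ ^ (m : ℕ)) ha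
  simpa using congrFun (Matrix.eq_zero_of_mulVec_eq_zero h hv) i

theorem det_galoisMatrix_update (Φ : L ≃ₐ[K] L) (g : Fin r → L) (j : Fin r) (c : Fin r → K) :
    (galoisMatrix Φ (Function.update g j (∑ m, c m • g m))).det =
      algebraMap K L (c j) * (galoisMatrix Φ g).det := by
  classical
  have h : galoisMatrix Φ (Function.update g j (∑ m, c m • g m)) =
      (galoisMatrix Φ g).updateCol j fun i => ∑ m, algebraMap K L (c m) • galoisMatrix Φ g i m := by
    ext i l
    rcases eq_or_ne l j with rfl | hl
    · simp [galoisMatrix, Algebra.smul_def, map_sum, -AlgEquiv.coe_pow]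
    · simp [galoisMatrix, hl]
  rw [h, Matrix.det_updateCol_sum, smul_eq_mul]

theorem oreMatrix_one_apply [NeZero r] (Φ : L → L) (f : Fin r → L) (u v : Fin r) :
    oreMatrix r Φ 1 f u v = Φ^[v] (f (u - v)) := by
  simp only [oreMatrix, Matrix.of_apply, one_mul]
  have := u.isLt
  have := v.isLt
  split_ifs with h <;> congr 2 <;> ext <;> simp only [Fin.sub_def]
  · rw [show r - v + u = u - v + r by omega, Nat.add_mod_right, Nat.mod_eq_of_lt (by omega)]
  · rw [Nat.mod_eq_of_lt (by omega)]
    omega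

theorem oreMatrix_one_transpose_mul_galoisMatrix [NeZero r] {Φ : L ≃ₐ[K] L} (hΦ : Φ ^ r = 1)
    (f : Fin r → L) (b : Basis (Fin r) K L) :
    (oreMatrix r Φ 1 f).transpose * galoisMatrix Φ b =
      galoisMatrix Φ b * (LinearMap.toMatrix b b (oreEval Φ f)).map (algebraMap K L) := by
  ext i j
  have hrhs : ∑ m, galoisMatrix Φ b i m * algebraMap K L (b.repr (oreEval Φ f (b j)) m) =
      (Φ ^ (i : ℕ)) (oreEval Φ f (b j)) := by
    conv_rhs => rw [← b.sum_repr (oreEval Φ f (b j))]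
    simp [galoisMatrix, Algebra.smul_def, map_sum, -AlgEquiv.coe_pow, mul_comm]
  have hlhs : ∑ m, (Φ ^ (i : ℕ)) (f (m - i)) * (Φ ^ (m : ℕ)) (b j) =
      (Φ ^ (i : ℕ)) (oreEval Φ f (b j)) := by
    rw [oreEval_apply, map_sum]
    refine Fintype.sum_equiv (Equiv.subRight i) _ _ fun m => ?_
    rw [Equiv.subRight_apply, map_mul, ← AlgEquiv.mul_apply, ← pow_add,
      pow_eq_pow_mod ((i : ℕ) + (m - i : Fin r)) hΦ, ← Fin.val_add, add_sub_cancel]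
  simp only [Matrix.mul_apply, Matrix.transpose_apply, oreMatrix_one_apply, ← AlgEquiv.coe_pow,
    Matrix.map_apply, LinearMap.toMatrix_apply, hrhs]
  exact hlhs

theorem det_oreMatrix_one [FiniteDimensional K L] [NeZero r] (hr : finrank K L = r)
    {Φ : L ≃ₐ[K] L} (hΦ : orderOf Φ = r) (f : Fin r → L) :
    (oreMatrix r Φ 1 f).det = algebraMap K L (LinearMap.det (oreEval Φ f)) := by
  let b := Module.finBasisOfFinrankEq K L hr
  refine mul_right_cancel₀ (det_galoisMatrix_ne_zero hΦ.ge b) ?_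
  rw [← Matrix.det_transpose, ← Matrix.det_mul,
    oreMatrix_one_transpose_mul_galoisMatrix (hΦ ▸ pow_orderOf_eq_one Φ), Matrix.det_mul,
    mul_comm, ← LinearMap.det_toMatrix b, RingHom.map_det, RingHom.mapMatrix_apply]

end Galois

def ResiduallyIndependent (k : Type*) {L : Type*} [Field k] [Field L] [Algebra k L]
    (w : AddValuation L (WithTop ℚ)) {ι : Type*} [Fintype ι] (y : ι → L) : Prop :=
  ∀ γ : ι → k, 1 ≤ w (∑ i, algebraMap k L (γ i) * y i) → ∀ i, γ i = 0

section Valuation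

variable {k K L : Type*} [Field k] [Field K] [Field L] [Algebra k L] [Algebra K L]
  {w : AddValuation L (WithTop ℚ)}

theorem ResiduallyIndependent.one_le_map_coeff
    (hres : ∀ c : K, 0 ≤ w (algebraMap K L c) →
      ∃ γ : k, 1 ≤ w (algebraMap K L c - algebraMap k L γ))
    {ι : Type*} [Fintype ι] {y : ι → L} (hy : ∀ i, 0 ≤ w (y i))
    (hyind : ResiduallyIndependent k w y) {c : ι → K} (hc : ∀ i, 0 ≤ w (algebraMap K L (c i)))
    (hsum : 1 ≤ w (∑ i, algebraMap K L (c i) * y i)) (i : ι) : 1 ≤ w (algebraMap K L (c i)) := by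
  choose γ hγ using fun i => hres (c i) (hc i)
  have hγsum : 1 ≤ w (∑ i, algebraMap k L (γ i) * y i) := by
    have heq : ∑ i, algebraMap k L (γ i) * y i = ∑ i, algebraMap K L (c i) * y i -
        ∑ i, (algebraMap K L (c i) - algebraMap k L (γ i)) * y i := by
      rw [← Finset.sum_sub_distrib]
      simp only [sub_mul, sub_sub_cancel]
    rw [heq]
    refine le_trans (le_min hsum (w.map_le_sum fun i _ => ?_)) (w.map_sub _ _)
    rw [w.map_mul]
    simpa using add_le_add (hγ i) (hy i)
  simpa [hyind γ hγsum i] using hγ i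

theorem ResiduallyIndependent.linearIndependent
    (hres : ∀ c : K, 0 ≤ w (algebraMap K L c) →
      ∃ γ : k, 1 ≤ w (algebraMap K L c - algebraMap k L γ))
    {ι : Type*} [Fintype ι] {y : ι → L} (hy : ∀ i, 0 ≤ w (y i))
    (hyind : ResiduallyIndependent k w y) : LinearIndependent K y := by
  rw [Fintype.linearIndependent_iff]
  intro c hc
  by_contra! hne
  obtain ⟨i, hi⟩ := hne
  have : Nonempty ι := ⟨i⟩
  obtain ⟨j₀, hj₀⟩ := Finite.exists_min fun j => w (algebraMap K L (c j))
  have hc₀ : c j₀ ≠ 0 := fun h => hi <| by simpa [h] using hj₀ i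
  have hsum : ∑ j, algebraMap K L ((c j₀)⁻¹ * c j) * y j = 0 :=
    calc ∑ j, algebraMap K L ((c j₀)⁻¹ * c j) * y j
        = algebraMap K L (c j₀)⁻¹ * ∑ j, c j • y j := by
          simp only [map_mul, Finset.mul_sum, Algebra.smul_def, mul_assoc]
      _ = 0 := by rw [hc, mul_zero]
  have key := hyind.one_le_map_coeff hres hy (c := fun j => (c j₀)⁻¹ * c j)
    (fun j => by simpa only [map_mul, map_inv₀] using w.nonneg_inv_mul (by simpa using hc₀) (hj₀ j))
    (by rw [hsum, w.map_zero]; exact le_top) j₀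
  simp only [inv_mul_cancel₀ hc₀, map_one, w.map_one] at key
  exact absurd key (by simp)

theorem exists_nonneg_map_pow_mul {t : K} (ht : w (algebraMap K L t) = 1) {x : L} (hx : x ≠ 0) :
    ∃ N : ℕ, 0 ≤ w (algebraMap K L (t ^ N) * x) := by
  obtain ⟨q, hq⟩ := WithTop.ne_top_iff_exists.mp (w.ne_top_iff.mpr hx)
  refine ⟨⌈-q⌉₊, ?_⟩
  rw [w.map_mul, map_pow, w.map_pow, ht, ← hq, ← WithTop.coe_one, ← WithTop.coe_nsmul,
    ← WithTop.coe_add, WithTop.coe_nonneg, nsmul_eq_mul, mul_one]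
  linarith [Nat.le_ceil (-q)]

theorem exists_basis_nonneg_apply_eq [FiniteDimensional K L] {n r : ℕ} (hr : finrank K L = r)
    {t : K} (ht : w (algebraMap K L t) = 1) {y : Fin n → L} (hyli : LinearIndependent K y)
    (hy : ∀ i, 0 ≤ w (y i)) :
    ∃ (b : Basis (Fin r) K L) (e : Fin n ↪ Fin r), (∀ i, b (e i) = y i) ∧ ∀ j, 0 ≤ w (b j) := by
  classical
  obtain ⟨b, e, hbe⟩ := Basis.exists_embedding_apply_eq hr hyli
  choose N hN using fun j => exists_nonneg_map_pow_mul ht (b.ne_zero j)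
  have ht0 : t ≠ 0 := by
    rintro rfl
    simp at ht
  let u : Fin r → Kˣ := fun j => if 0 ≤ w (b j) then 1 else Units.mk0 (t ^ N j) (pow_ne_zero _ ht0)
  refine ⟨b.unitsSMul u, e, fun i => ?_, fun j => ?_⟩
  · simp [Basis.unitsSMul_apply, u, hbe, hy]
  · rw [Basis.unitsSMul_apply]
    by_cases hj : 0 ≤ w (b j)
    · simp [u, hj]
    · simpa [u, hj, Units.smul_def, Algebra.smul_def] using hN j

theorem ResiduallyIndependent.one_le_map_repr
    (hres : ∀ c : K, 0 ≤ w (algebraMap K L c) →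
      ∃ γ : k, 1 ≤ w (algebraMap K L c - algebraMap k L γ))
    {κ ι : Type*} [Fintype κ] [Fintype ι] {y : κ → L} (hy : ∀ i, 0 ≤ w (y i))
    (hyind : ResiduallyIndependent k w y) (e : κ ↪ ι) (b : Basis ι K L)
    (hbe : ∀ i, b (e i) = y i) (hb : ∀ m, 0 ≤ w (b m)) {u : L} (hu : 1 ≤ w u)
    (hc : ∀ m, 0 ≤ w (algebraMap K L (b.repr u m)))
    (hout : ∀ m ∉ Set.range e, 1 ≤ w (algebraMap K L (b.repr u m))) (m : ι) :
    1 ≤ w (algebraMap K L (b.repr u m)) := by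
  classical
  have hsplit : ∑ i, algebraMap K L (b.repr u (e i)) * y i =
      u - ∑ m ∈ (Finset.univ.map e)ᶜ, b.repr u m • b m := by
    rw [eq_sub_iff_add_eq]
    calc _ = ∑ m ∈ Finset.univ.map e, b.repr u m • b m +
          ∑ m ∈ (Finset.univ.map e)ᶜ, b.repr u m • b m := by
          simp [Finset.sum_map, hbe, Algebra.smul_def]
      _ = u := by rw [Finset.sum_add_sum_compl, b.sum_repr]
  have hy_coeff := hyind.one_le_map_coeff hres hy (c := fun i => b.repr u (e i))
      (fun i => hc _) <| by
    rw [hsplit]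
    refine le_trans (le_min hu (w.map_le_sum fun m hm => ?_)) (w.map_sub _ _)
    have hm' : m ∉ Set.range e := by simpa using hm
    rw [Algebra.smul_def, w.map_mul]
    simpa using add_le_add (hout m hm') (hb m)
  by_cases hm : m ∈ Set.range e
  · obtain ⟨i, rfl⟩ := hm
    exact hy_coeff i
  · exact hout m hm

theorem exists_det_galoisMatrix_add_one_le
    (hdisc : ∀ c : K, 0 < w (algebraMap K L c) → 1 ≤ w (algebraMap K L c))
    {t : K} (ht : w (algebraMap K L t) = 1) (Φ : L ≃ₐ[K] L) {r : ℕ} (b : Basis (Fin r) K L)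
    (hW : (galoisMatrix Φ b).det ≠ 0) (hb : ∀ m, 0 ≤ w (b m)) {u : L} (hu : 1 ≤ w u)
    {j : Fin r} (hj : w (algebraMap K L (b.repr u j)) < 1) :
    ∃ g : Fin r → L, (galoisMatrix Φ g).det ≠ 0 ∧ (∀ m ≠ j, g m = b m) ∧ (∀ m, 0 ≤ w (g m)) ∧
      w (galoisMatrix Φ g).det + 1 ≤ w (galoisMatrix Φ b).det := by
  have ht0 : t ≠ 0 := by
    rintro rfl
    simp at ht
  have hcj : w (algebraMap K L (b.repr u j)) ≤ 0 := not_lt.mp fun h => (hdisc _ h).not_gt hj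
  have hcj0 : b.repr u j ≠ 0 := by
    rintro h
    simp [h] at hj
  have htinv : w (algebraMap K L t⁻¹) + 1 = 0 := by
    rw [← ht, ← w.map_mul, ← map_mul, inv_mul_cancel₀ ht0, map_one, w.map_one]
  have hsum : ∑ m, (t⁻¹ * b.repr u m) • b m = t⁻¹ • u := by
    simp only [mul_smul, ← Finset.smul_sum, b.sum_repr]
  have hdet : (galoisMatrix Φ (Function.update b j (t⁻¹ • u))).det =
      algebraMap K L (t⁻¹ * b.repr u j) * (galoisMatrix Φ b).det := by
    rw [← hsum, det_galoisMatrix_update]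
  refine ⟨Function.update b j (t⁻¹ • u), ?_, fun m hm => Function.update_of_ne hm _ _,
    fun m => ?_, ?_⟩
  · rw [hdet]
    exact mul_ne_zero (by simp [ht0, hcj0]) hW
  · rcases eq_or_ne m j with rfl | hm
    · rw [Function.update_self, Algebra.smul_def, w.map_mul, ← htinv]
      exact add_le_add le_rfl hu
    · rw [Function.update_of_ne hm]
      exact hb m
  · rw [hdet, w.map_mul, map_mul, w.map_mul]
    calc w (algebraMap K L t⁻¹) + w (algebraMap K L (b.repr u j)) + w (galoisMatrix Φ b).det + 1
        = (w (algebraMap K L t⁻¹) + 1) + w (algebraMap K L (b.repr u j)) +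
            w (galoisMatrix Φ b).det := by ac_rfl
      _ ≤ 0 + 0 + w (galoisMatrix Φ b).det := by rw [htinv]; gcongr
      _ = w (galoisMatrix Φ b).det := by simp

theorem map_repr_nonneg_of_minimal
    (hdisc : ∀ c : K, 0 < w (algebraMap K L c) → 1 ≤ w (algebraMap K L c))
    {t : K} (ht : w (algebraMap K L t) = 1)
    (hres : ∀ c : K, 0 ≤ w (algebraMap K L c) →
      ∃ γ : k, 1 ≤ w (algebraMap K L c - algebraMap k L γ))
    {n r : ℕ} {y : Fin n → L} (hy : ∀ i, 0 ≤ w (y i)) (hyind : ResiduallyIndependent k w y)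
    (Φ : L ≃ₐ[K] L) (e : Fin n ↪ Fin r) (b : Basis (Fin r) K L) (hbe : ∀ i, b (e i) = y i)
    (hb : ∀ m, 0 ≤ w (b m)) (hW : (galoisMatrix Φ b).det ≠ 0)
    (hmin : ∀ g : Fin r → L, (galoisMatrix Φ g).det ≠ 0 → (∀ i, g (e i) = y i) →
      (∀ m, 0 ≤ w (g m)) → w (galoisMatrix Φ b).det < w (galoisMatrix Φ g).det + 1)
    {z : L} (hz : 0 ≤ w z) (j : Fin r) : 0 ≤ w (algebraMap K L (b.repr z j)) := by
  by_contra! hneg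
  have : Nonempty (Fin r) := ⟨j⟩
  obtain ⟨j₀, hj₀⟩ := Finite.exists_min fun m => w (algebraMap K L (b.repr z m))
  have hc₀neg : w (algebraMap K L (b.repr z j₀)) < 0 := (hj₀ j).trans_lt hneg
  have hc₀ : b.repr z j₀ ≠ 0 := by
    rintro h
    simp [h] at hc₀neg
  have hc₀' : algebraMap K L (b.repr z j₀) ≠ 0 := by simpa using hc₀
  have hs : 1 ≤ w (algebraMap K L (b.repr z j₀)⁻¹) := by
    refine hdisc _ ?_
    obtain ⟨q, hq⟩ := WithTop.ne_top_iff_exists.mp (w.ne_top_iff.mpr hc₀')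
    rw [← hq] at hc₀neg
    rw [map_inv₀, w.map_inv, ← hq, ← WithTop.LinearOrderedAddCommGroup.coe_neg]
    exact_mod_cast neg_pos.mpr (by exact_mod_cast hc₀neg)
  have hu : 1 ≤ w ((b.repr z j₀)⁻¹ • z) := by
    rw [Algebra.smul_def, w.map_mul]
    simpa using add_le_add hs hz
  have hc : ∀ m, 0 ≤ w (algebraMap K L (b.repr ((b.repr z j₀)⁻¹ • z) m)) := fun m => by
    simpa only [map_smul, Finsupp.smul_apply, smul_eq_mul, map_mul, map_inv₀] using
      w.nonneg_inv_mul hc₀' (hj₀ m)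
  by_cases hout : ∀ m ∉ Set.range e, 1 ≤ w (algebraMap K L (b.repr ((b.repr z j₀)⁻¹ • z) m))
  · have h1 := hyind.one_le_map_repr hres hy e b hbe hb hu hc hout j₀
    simp only [map_smul, Finsupp.smul_apply, smul_eq_mul, inv_mul_cancel₀ hc₀, map_one,
      w.map_one] at h1
    exact absurd h1 (by simp)
  · push Not at hout
    obtain ⟨j₁, hj₁e, hj₁⟩ := hout
    obtain ⟨g, hgW, hgb, hg, hlt⟩ := exists_det_galoisMatrix_add_one_le hdisc ht Φ b hW hb hu hj₁
    have hge : ∀ i, g (e i) = y i := fun i => (hgb _ fun h => hj₁e ⟨i, h⟩).trans (hbe i)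
    exact lt_irrefl _ ((hmin g hgW hge hg).trans_le hlt)

theorem map_pow_apply_eq {Φ : L ≃ₐ[K] L} (hΦw : ∀ a, w (Φ a) = w a) (m : ℕ) (a : L) :
    w ((Φ ^ m) a) = w a := by
  induction m with
  | zero => simp
  | succ m ih => rw [pow_succ', AlgEquiv.mul_apply, hΦw, ih]

theorem nonneg_map_det_galoisMatrix {r : ℕ} {Φ : L ≃ₐ[K] L} (hΦw : ∀ a, w (Φ a) = w a)
    {g : Fin r → L} (hg : ∀ j, 0 ≤ w (g j)) : 0 ≤ w (galoisMatrix Φ g).det := by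
  classical
  simpa using w.le_map_det _ 0 fun i j => (map_pow_apply_eq hΦw i (g j)).symm ▸ hg j

theorem nonneg_map_oreEval {r : ℕ} {Φ : L ≃ₐ[K] L} (hΦw : ∀ a, w (Φ a) = w a) {f : Fin r → L}
    (hf : ∀ i, 0 ≤ w (f i)) {x : L} (hx : 0 ≤ w x) : 0 ≤ w (oreEval Φ f x) := by
  rw [oreEval_apply]
  refine w.map_le_sum fun i _ => ?_
  rw [w.map_mul, map_pow_apply_eq hΦw]
  simpa using add_le_add (hf i) hx

theorem one_le_map_repr_of_nonneg {t : K} (ht : w (algebraMap K L t) = 1) {ι : Type*}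
    (b : Basis ι K L) (hint : ∀ z, 0 ≤ w z → ∀ m, 0 ≤ w (algebraMap K L (b.repr z m)))
    {z : L} (hz : 1 ≤ w z) (m : ι) : 1 ≤ w (algebraMap K L (b.repr z m)) := by
  have ht0 : t ≠ 0 := by
    rintro rfl
    simp at ht
  have hz' : 0 ≤ w (t⁻¹ • z) := by
    rw [Algebra.smul_def, w.map_mul, ← w.map_one, ← map_one (algebraMap K L),
      ← inv_mul_cancel₀ ht0, map_mul, w.map_mul, ht]
    exact add_le_add le_rfl hz
  have hrepr : b.repr z m = t * b.repr (t⁻¹ • z) m := by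
    rw [map_smul, Finsupp.smul_apply, smul_eq_mul, mul_inv_cancel_left₀ ht0]
  rw [hrepr, map_mul, w.map_mul, ht]
  simpa using add_le_add (le_refl (1 : WithTop ℚ)) (hint _ hz' m)

theorem le_map_det_oreEval [FiniteDimensional K L] {r : ℕ} (hr : finrank K L = r)
    {Φ : L ≃ₐ[K] L} (hΦ : r ≤ orderOf Φ) (hΦw : ∀ a, w (Φ a) = w a)
    (hdisc : ∀ c : K, 0 < w (algebraMap K L c) → 1 ≤ w (algebraMap K L c))
    {t : K} (ht : w (algebraMap K L t) = 1)
    (hres : ∀ c : K, 0 ≤ w (algebraMap K L c) →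
      ∃ γ : k, 1 ≤ w (algebraMap K L c - algebraMap k L γ))
    {n : ℕ} {y : Fin n → L} (hy : ∀ i, 0 ≤ w (y i)) (hyind : ResiduallyIndependent k w y)
    {f : Fin r → L} (hf : ∀ i, 0 ≤ w (f i)) (hyker : ∀ i, 1 ≤ w (oreEval Φ f (y i))) :
    (n : WithTop ℚ) ≤ w (algebraMap K L (LinearMap.det (oreEval Φ f))) := by
  classical
  obtain ⟨b₀, e, hb₀e, hb₀⟩ :=
    exists_basis_nonneg_apply_eq hr ht (hyind.linearIndependent hres hy) hy
  obtain ⟨g, ⟨hgW, hge, hg⟩, hmin⟩ := exists_forall_lt_add_one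
    (s := {g : Fin r → L | (galoisMatrix Φ g).det ≠ 0 ∧ (∀ i, g (e i) = y i) ∧ ∀ m, 0 ≤ w (g m)})
    ⟨b₀, det_galoisMatrix_ne_zero hΦ b₀, hb₀e, hb₀⟩ (fun g => w (galoisMatrix Φ g).det)
    (fun g hg => nonneg_map_det_galoisMatrix hΦw hg.2.2) (fun g hg => w.ne_top_iff.mpr hg.1)
  have : Nonempty (Fin r) := ⟨⟨0, hr ▸ Module.finrank_pos⟩⟩
  let b := basisOfLinearIndependentOfCardEqFinrank
    (linearIndependent_of_det_galoisMatrix_ne_zero hgW) (by simp [hr])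
  have hb : ⇑b = g := coe_basisOfLinearIndependentOfCardEqFinrank _ _
  have hint : ∀ z, 0 ≤ w z → ∀ m, 0 ≤ w (algebraMap K L (b.repr z m)) :=
    fun z hz => map_repr_nonneg_of_minimal hdisc ht hres hy hyind Φ e b (by rwa [hb])
      (by rwa [hb]) (by rwa [hb]) (fun g' h₁ h₂ h₃ => hb ▸ hmin g' ⟨h₁, h₂, h₃⟩) hz
  calc (n : WithTop ℚ) = ∑ m, if m ∈ Finset.univ.map e then 1 else 0 := by
        simp [Finset.card_image_of_injective _ e.injective]
    _ ≤ w.comap (algebraMap K L) (LinearMap.toMatrix b b (oreEval Φ f)).det :=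
      (w.comap _).le_map_det _ _ fun i m => ?_
    _ = w (algebraMap K L (LinearMap.det (oreEval Φ f))) := by
      rw [LinearMap.det_toMatrix]
      rfl
  rw [LinearMap.toMatrix_apply]
  split_ifs with hm
  · obtain ⟨i', -, rfl⟩ := Finset.mem_map.mp hm
    exact one_le_map_repr_of_nonneg ht b hint (by rw [hb, hge]; exact hyker i') i
  · exact hint _ (nonneg_map_oreEval hΦw hf (hb ▸ hg m)) i

end Valuation

theorem stmt_11_general (k K L : Type*) [Field k] [Field K] [Field L]
    [Algebra K L] [Algebra k L]
    [IsGalois K L]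
    (r : ℕ) (hr : 0 < r) (hrk : Module.finrank K L = r)
    (Φ : L ≃ₐ[K] L) (hgen : ∀ σ : L ≃ₐ[K] L, σ ∈ Subgroup.zpowers Φ)
    (v : L → WithTop ℚ)
    (hv0 : ∀ a : L, v a = ⊤ ↔ a = 0)
    (hvmul : ∀ a b : L, v (a * b) = v a + v b)
    (hvadd : ∀ a b : L, min (v a) (v b) ≤ v (a + b))
    (hΦv : ∀ a : L, v (Φ a) = v a)
    -- the valuation is discrete (integer-valued) on `K = k((t))`:
    (hKint : ∀ y : K, y ≠ 0 → ∃ z : ℤ, v (algebraMap K L y) = (z : ℚ))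
    -- `t` is a uniformizer of `K`:
    (t : K) (ht : v (algebraMap K L t) = (1 : ℚ))
    -- the residue field of `K` is `k`:
    (hres : ∀ y : K, 0 ≤ v (algebraMap K L y) →
      ∃ c : k, (1 : ℚ) ≤ v (algebraMap K L y - algebraMap k L c))
    (f : Fin r → L) (hf : ∀ i, 0 ≤ v (f i)) :
    ∀ (n : ℕ) (y : Fin n → L),
      (∀ i, 0 ≤ v (y i)) →
      (∀ c : Fin n → k,
        (1 : ℚ) ≤ v (∑ i, algebraMap k L (c i) * y i) → ∀ i, c i = 0) →
      (∀ i, (1 : ℚ) ≤ v (∑ j : Fin r, f j * (Φ ^ j.val) (y i))) →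
      (n : WithTop ℚ) ≤ v ((oreMatrix r ⇑Φ (1 : L) f).det) := by
  intro n y hy hyind hyker
  have : NeZero r := ⟨hr.ne'⟩
  have : FiniteDimensional K L := Module.finite_of_finrank_pos (hrk ▸ hr)
  let w : AddValuation L (WithTop ℚ) := AddValuation.of v ((hv0 0).mpr rfl)
    (map_one_eq_zero_of_map_mul (fun h => one_ne_zero ((hv0 1).mp h)) hvmul) hvadd hvmul
  have hord : orderOf Φ = r := by
    rw [orderOf_eq_card_of_forall_mem_zpowers hgen, IsGalois.card_aut_eq_finrank, hrk]
  rw [det_oreMatrix_one hrk hord f]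
  exact le_map_det_oreEval (w := w) hrk hord.ge hΦv
    (fun c => one_le_of_pos_of_forall_eq_intCast (by simp [(hv0 0).mpr rfl]) hKint) ht hres hy hyind hf
    fun i => by rw [oreEval_apply]; exact hyker i

/-- for `f ∈ Λ_{L,1}` (all coefficients of nonnegative valuation),
`v_t(Nrd(f)) ≥ dim_k ker ε̄(f)`, where `ε̄(f)` is the reduction mod `t` of
`ε(f) = Σ (mul aᵢ) ∘ Φⁱ : O_L → O_L`.  The kernel dimension is expressed
through families: for every family `y₁,…,y_n ∈ O_L` whose reductions mod `tO_L`
are `k`-linearly independent and killed by `ε̄(f)` (i.e. `v(ε(f)(yᵢ)) ≥ 1`),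
one has `n ≤ v(Nrd(f))`. -/
theorem stmt_11 (k K L : Type*) [Field k] [Field K] [Field L]
    [Algebra k K] [Algebra K L] [Algebra k L] [IsScalarTower k K L]
    [IsGalois K L]
    (r : ℕ) (hr : 0 < r) (hrk : Module.finrank K L = r)
    (Φ : L ≃ₐ[K] L) (hgen : ∀ σ : L ≃ₐ[K] L, σ ∈ Subgroup.zpowers Φ)
    (v : L → WithTop ℚ)
    (hv0 : ∀ a : L, v a = ⊤ ↔ a = 0)
    (hvmul : ∀ a b : L, v (a * b) = v a + v b)
    (hvadd : ∀ a b : L, min (v a) (v b) ≤ v (a + b))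
    (hΦv : ∀ a : L, v (Φ a) = v a)
    -- the valuation is discrete (integer-valued) on `K = k((t))`:
    (hKint : ∀ y : K, y ≠ 0 → ∃ z : ℤ, v (algebraMap K L y) = (z : ℚ))
    -- `t` is a uniformizer of `K`:
    (t : K) (ht : v (algebraMap K L t) = (1 : ℚ))
    -- the residue field of `K` is `k`:
    (hvk : ∀ c : k, c ≠ 0 → v (algebraMap k L c) = (0 : ℚ))
    (hres : ∀ y : K, 0 ≤ v (algebraMap K L y) →
      ∃ c : k, (1 : ℚ) ≤ v (algebraMap K L y - algebraMap k L c))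
    (f : Fin r → L) (hf : ∀ i, 0 ≤ v (f i)) :
    ∀ (n : ℕ) (y : Fin n → L),
      (∀ i, 0 ≤ v (y i)) →
      (∀ c : Fin n → k,
        (1 : ℚ) ≤ v (∑ i, algebraMap k L (c i) * y i) → ∀ i, c i = 0) →
      (∀ i, (1 : ℚ) ≤ v (∑ j : Fin r, f j * (Φ ^ j.val) (y i))) →
      (n : WithTop ℚ) ≤ v ((oreMatrix r ⇑Φ (1 : L) f).det) :=
  stmt_11_general k K L r hr hrk Φ hgen v hv0 hvmul hvadd hΦv hKint t ht hres f hf
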